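/- arXiv:1701.03073 — 6 statements merged into one kernel-verified Lean document; each statement's English description precedes it below -/
import Mathlib

section
/- Let (X,p,E) be a lattice-normed space. If every p-Cauchy sequence in X is p-convergent (i.e., X is sequentially p-complete), then X is rp-complete, i.e., every rp-Cauchy sequence in X is rp-convergent. -/
open Filter Topology

/-- Directedness of a relation. -/
def DirRel {ι : Type*} (r : ι → ι → Prop) : Prop := ∀ a b : ι, ∃ c, r a c ∧ r b c

/-- Order convergence of a net `x` (indexed by `ι`, ordered by `r`) to `l` in `E`:
there is a net `z` decreasing to `0` eventually dominating `|x · - l|`. -/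
def OConv {ι E : Type*} [Lattice E] [AddCommGroup E]
    (r : ι → ι → Prop) (x : ι → E) (l : E) : Prop :=
  ∃ (κ : Type) (s : κ → κ → Prop) (z : κ → E),
    Nonempty κ ∧ DirRel s ∧
    (∀ b₁ b₂ : κ, s b₁ b₂ → z b₂ ≤ z b₁) ∧
    (∀ b, 0 ≤ z b) ∧
    (∀ e : E, (∀ b, e ≤ z b) → e ≤ 0) ∧
    (∀ b, ∃ a₀, ∀ a, r a₀ a → |x a - l| ≤ z b)

/-- Order convergence of a sequence. -/
def OConvSeq {E : Type*} [Lattice E] [AddCommGroup E] (x : ℕ → E) (l : E) : Prop :=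
  OConv (· ≤ · : ℕ → ℕ → Prop) x l

/-- `p : X → E` is a vector norm (lattice norm) into the positive cone of `E`. -/
structure IsVectorNorm {X E : Type*} [AddCommGroup X] [Module ℝ X]
    [Lattice E] [AddCommGroup E] [Module ℝ E] (p : X → E) : Prop where
  nonneg : ∀ x, 0 ≤ p x
  eq_zero_iff : ∀ x, p x = 0 ↔ x = 0
  smul_eq : ∀ (r : ℝ) (x : X), p (r • x) = |r| • p x
  add_le : ∀ x y, p (x + y) ≤ p x + p y

/-- Monotonicity of the lattice norm: the LNVL condition. -/
def IsMonotoneVN {X E : Type*} [Lattice X] [AddCommGroup X] [Lattice E] [AddCommGroup E]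
    (p : X → E) : Prop := ∀ x y : X, |x| ≤ |y| → p x ≤ p y

/-!
An rp-Cauchy sequence with regulator `e` is p-Cauchy, because in an Archimedean lattice the
sequence `(1 / (k + 1)) • e` decreases to `0`. Its p-limit `l` is then an rp-limit with the same
regulator: `p (x n - l) ≤ ε • e + p (x m - l)` for all large `m`, and the last term order-converges
to `0`.
-/

section OrderConvergence

variable {E : Type*} [Lattice E] [AddCommGroup E] [AddLeftMono E]

theorem monotone_smul_of_forall_pos_smul_nonneg [Module ℝ E] {e : E}
    (h : ∀ t : ℝ, 0 < t → 0 ≤ t • e) : Monotone fun t : ℝ => t • e := by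
  intro t₁ t₂ ht
  rcases ht.eq_or_lt with rfl | ht
  · exact le_rfl
  · exact sub_nonneg.mp (by rw [← sub_smul]; exact h _ (sub_pos.mpr ht))

/-- Relatively uniform convergence implies order convergence in an Archimedean lattice. -/
theorem oConv_of_forall_abs_sub_le_smul [Module ℝ E]
    (harch : ∀ x y : E, (∀ n : ℕ, (n : ℝ) • x ≤ y) → x ≤ 0)
    {e : E} (he : Monotone fun t : ℝ => t • e)
    {ι : Type*} {r : ι → ι → Prop} {x : ι → E} {l : E}
    (h : ∀ ε : ℝ, 0 < ε → ∃ a₀, ∀ a, r a₀ a → |x a - l| ≤ ε • e) : OConv r x l := by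
  refine ⟨ℕ, (· ≤ ·), fun k => (1 / ((k : ℝ) + 1)) • e, ⟨0⟩,
    fun a b => ⟨max a b, le_max_left _ _, le_max_right _ _⟩,
    fun k₁ k₂ hk => he (by gcongr), fun k => ?_, fun f hf => harch f e fun n => ?_,
    fun k => h _ (by positivity)⟩
  · simpa using he (show (0 : ℝ) ≤ 1 / ((k : ℝ) + 1) by positivity)
  · calc (n : ℝ) • f = n • f := Nat.cast_smul_eq_nsmul ℝ n f
      _ ≤ n • ((1 / ((n : ℝ) + 1)) • e) := nsmul_le_nsmul_right (hf n) n
      _ = ((n : ℝ) / (n + 1)) • e := by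
        rw [← Nat.cast_smul_eq_nsmul ℝ, smul_smul, mul_one_div]
      _ ≤ (1 : ℝ) • e := he (by rw [div_le_one (by positivity)]; linarith)
      _ = e := one_smul ℝ e

theorem OConvSeq.le_of_forall_le_add {y : ℕ → E} (hy : OConvSeq y 0) {a c : E} {N : ℕ}
    (h : ∀ m, N ≤ m → a ≤ c + y m) : a ≤ c := by
  obtain ⟨κ, s, z, -, -, -, -, hinf, hdom⟩ := hy
  refine sub_nonpos.mp (hinf _ fun k => ?_)
  obtain ⟨m₀, hm₀⟩ := hdom k
  calc a - c ≤ y (max m₀ N) := sub_le_iff_le_add'.mpr (h _ (le_max_right _ _))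
    _ ≤ |y (max m₀ N) - 0| := by rw [sub_zero]; exact le_abs_self _
    _ ≤ z k := hm₀ _ (le_max_left _ _)

end OrderConvergence

/-- A sequentially p-complete LNS is rp-complete. -/
theorem stmt_0 {X E : Type*} [AddCommGroup X] [Module ℝ X]
    [Lattice E] [AddCommGroup E] [Module ℝ E]
    [CovariantClass E E (· + ·) (· ≤ ·)]
    (harch : ∀ x y : E, (∀ n : ℕ, (n : ℝ) • x ≤ y) → x ≤ 0)
    (p : X → E) (hp : IsVectorNorm p)
    -- sequential p-completeness: every p-Cauchy sequence p-converges
    (hcomp : ∀ x : ℕ → X,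
      OConv (fun a b : ℕ × ℕ => a.1 ≤ b.1 ∧ a.2 ≤ b.2)
        (fun q => p (x q.1 - x q.2)) 0 →
      ∃ l : X, OConvSeq (fun n => p (x n - l)) 0) :
    -- rp-completeness: every rp-Cauchy sequence rp-converges
    ∀ x : ℕ → X,
      (∃ e : E, 0 ≤ e ∧ ∀ ε : ℝ, 0 < ε → ∃ N : ℕ, ∀ m n : ℕ, N ≤ m → N ≤ n →
        p (x m - x n) ≤ ε • e) →
      ∃ (l : X) (e : E), 0 ≤ e ∧ ∀ ε : ℝ, 0 < ε → ∃ N : ℕ, ∀ n : ℕ, N ≤ n →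
        p (x n - l) ≤ ε • e := by
  rintro x ⟨e, he0, hC⟩
  -- `E` is not an ordered module, so monotonicity of `t ↦ t • e` comes from `p 0 = 0 ≤ t • e`.
  have he : Monotone fun t : ℝ => t • e := monotone_smul_of_forall_pos_smul_nonneg fun t ht => by
    obtain ⟨N, hN⟩ := hC t ht
    have hp0 : p 0 = 0 := (hp.eq_zero_iff 0).mpr rfl
    simpa [hp0] using hN N N le_rfl le_rfl
  have hcauchy : OConv (fun a b : ℕ × ℕ => a.1 ≤ b.1 ∧ a.2 ≤ b.2)
      (fun q => p (x q.1 - x q.2)) 0 := by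
    refine oConv_of_forall_abs_sub_le_smul harch he fun ε hε => ?_
    obtain ⟨N, hN⟩ := hC ε hε
    refine ⟨(N, N), fun a ha => ?_⟩
    rw [sub_zero, abs_of_nonneg (hp.nonneg _)]
    exact hN a.1 a.2 ha.1 ha.2
  obtain ⟨l, hl⟩ := hcomp x hcauchy
  refine ⟨l, e, he0, fun ε hε => ?_⟩
  obtain ⟨N, hN⟩ := hC ε hε
  refine ⟨N, fun n hn => hl.le_of_forall_le_add fun m (hm : N ≤ m) => ?_⟩
  calc p (x n - l) = p ((x n - x m) + (x m - l)) := by rw [sub_add_sub_cancel]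
    _ ≤ p (x n - x m) + p (x m - l) := hp.add_le _ _
    _ ≤ ε • e + p (x m - l) := add_le_add_left (hN n m hn hm) _
end

section
/- Let (X,p,E) be an LNVL with E a Banach lattice and (Y,m,F) an LNS with F a σ-order continuous normed lattice. If T: X → Y is sequentially p-continuous (xₙ p-converges to 0 implies Txₙ p-converges to 0), then T is continuous with respect to the mixed norms: ‖p(xₙ)‖_E → 0 implies ‖m(Txₙ)‖_F → 0. -/
open Filter Topology

/-!
A norm-null sequence in a Banach lattice has a subsequence with summable norms, and such a
sequence order-converges to `0`: the tails `∑_{k ≥ b} |g k|` decrease, dominate `|g a|` for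
`a ≥ b`, and their norms tend to `0`, so their infimum is `0` by solidity of the norm. Hence
if `‖p(xₙ)‖ → 0`, every subsequence of `xₙ` has a further subsequence along which `p(xₙ)`
order-converges to `0`; sequential p-continuity of `T` and σ-order continuity of `F` then make
`‖m(T xₙ)‖` tend to `0` along it, which is enough for the whole sequence.
-/

section BanachLattice

variable {E : Type*} [NormedAddCommGroup E] [Lattice E] [HasSolidNorm E] [IsOrderedAddMonoid E]

lemma le_zero_of_forall_le_of_tendsto_norm {ι : Type*} {l : Filter ι} [l.NeBot] {z : ι → E}
    (hz : Tendsto (‖z ·‖) l (𝓝 0)) (hz0 : ∀ b, 0 ≤ z b) {e : E} (he : ∀ b, e ≤ z b) :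
    e ≤ 0 := by
  have hnorm : ∀ b, ‖e⁺‖ ≤ ‖z b‖ := fun b =>
    norm_le_norm_of_abs_le_abs <| by
      rw [abs_of_nonneg (posPart_nonneg e), abs_of_nonneg (hz0 b), posPart_def]
      exact sup_le (he b) (hz0 b)
  rw [← posPart_eq_zero, ← norm_le_zero_iff]
  exact ge_of_tendsto' hz hnorm

lemma oconvSeq_zero_of_abs_le_antitone {g z : ℕ → E} (hz : Antitone z) (hz0 : ∀ b, 0 ≤ z b)
    (hzn : Tendsto (‖z ·‖) atTop (𝓝 0)) (hgz : ∀ b a, b ≤ a → |g a| ≤ z b) :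
    OConvSeq g 0 :=
  ⟨ℕ, (· ≤ ·), z, ⟨0⟩, fun a b => ⟨max a b, le_max_left a b, le_max_right a b⟩,
    fun _ _ h => hz h, hz0, fun _ he => le_zero_of_forall_le_of_tendsto_norm hzn hz0 he,
    fun b => ⟨b, fun a ha => by simpa only [sub_zero] using hgz b a ha⟩⟩

variable [CompleteSpace E]

lemma oconvSeq_zero_of_summable_norm {g : ℕ → E} (hg : Summable (‖g ·‖)) : OConvSeq g 0 := by
  have habs : Summable (|g ·|) := Summable.of_norm (by simpa only [norm_abs_eq_norm] using hg)
  have htail : ∀ b, Summable (fun k => |g (k + b)|) := fun b => (summable_nat_add_iff b).2 habs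
  refine oconvSeq_zero_of_abs_le_antitone (z := fun b => ∑' k, |g (k + b)|) ?_
    (fun b => tsum_nonneg fun k => abs_nonneg _) ?_ ?_
  · refine antitone_nat_of_succ_le fun b => ?_
    rw [(htail b).tsum_eq_zero_add]
    simp only [zero_add, add_assoc, add_comm 1 b]
    exact le_add_of_nonneg_left (abs_nonneg _)
  · refine squeeze_zero (fun _ => norm_nonneg _) (fun b => ?_) (tendsto_sum_nat_add (‖g ·‖))
    simpa only [norm_abs_eq_norm] using norm_tsum_le_tsum_norm (f := fun k => |g (k + b)|)
      (by simpa only [norm_abs_eq_norm] using (summable_nat_add_iff b).2 hg)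
  · intro b a hba
    simpa only [Nat.sub_add_cancel hba] using
      (htail b).le_tsum (a - b) fun j _ => abs_nonneg (g (j + b))

lemma exists_subseq_oconvSeq_zero_of_tendsto_norm {u : ℕ → E}
    (hu : Tendsto (‖u ·‖) atTop (𝓝 0)) : ∃ φ : ℕ → ℕ, StrictMono φ ∧ OConvSeq (u ∘ φ) 0 := by
  have hsmall : ∀ n, ∃ N, ∀ k ≥ N, ‖u k‖ ≤ (1 / 2 : ℝ) ^ n := fun n =>
    eventually_atTop.1 <| (tendsto_order.1 hu).2 _ (by positivity) |>.mono fun _ h => h.le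
  obtain ⟨φ, hφ, hφle⟩ := extraction_forall_of_eventually' hsmall
  exact ⟨φ, hφ, oconvSeq_zero_of_summable_norm <|
    summable_geometric_two.of_nonneg_of_le (fun _ => norm_nonneg _) hφle⟩

end BanachLattice

theorem stmt_5_general {X E Y F : Type*} [AddCommGroup X] [Module ℝ X]
    [NormedAddCommGroup E] [Lattice E] [HasSolidNorm E] [IsOrderedAddMonoid E] [CompleteSpace E]
    [AddCommGroup Y] [Module ℝ Y]
    [NormedAddCommGroup F] [Lattice F]
    (p : X → E)
    (m : Y → F)
    -- F is σ-order continuous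
    (hF : ∀ f : ℕ → F, OConvSeq f 0 → Tendsto (fun n => ‖f n‖) atTop (𝓝 0))
    (T : X →ₗ[ℝ] Y)
    -- T is sequentially p-continuous
    (hT : ∀ x : ℕ → X, OConvSeq (fun n => p (x n)) 0 →
      OConvSeq (fun n => m (T (x n))) 0) :
    ∀ x : ℕ → X, Tendsto (fun n => ‖p (x n)‖) atTop (𝓝 0) →
      Tendsto (fun n => ‖m (T (x n))‖) atTop (𝓝 0) := by
  intro x hx
  refine tendsto_of_subseq_tendsto fun ns hns => ?_
  obtain ⟨φ, -, hφ⟩ := exists_subseq_oconvSeq_zero_of_tendsto_norm (hx.comp hns)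
  exact ⟨φ, hF _ (hT (fun n => x (ns (φ n))) hφ)⟩

/-- A sequentially p-continuous operator between suitable lattice-normed
spaces is continuous for the mixed norms. -/
theorem stmt_5 {X E Y F : Type*} [Lattice X] [AddCommGroup X] [Module ℝ X]
    [NormedAddCommGroup E] [Lattice E] [HasSolidNorm E] [IsOrderedAddMonoid E] [NormedSpace ℝ E] [CompleteSpace E]
    [AddCommGroup Y] [Module ℝ Y]
    [NormedAddCommGroup F] [Lattice F] [HasSolidNorm F] [IsOrderedAddMonoid F] [NormedSpace ℝ F]
    (p : X → E) (hp : IsVectorNorm p) (hpmono : IsMonotoneVN p)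
    (m : Y → F) (hm : IsVectorNorm m)
    -- F is σ-order continuous
    (hF : ∀ f : ℕ → F, OConvSeq f 0 → Tendsto (fun n => ‖f n‖) atTop (𝓝 0))
    (T : X →ₗ[ℝ] Y)
    -- T is sequentially p-continuous
    (hT : ∀ x : ℕ → X, OConvSeq (fun n => p (x n)) 0 →
      OConvSeq (fun n => m (T (x n))) 0) :
    ∀ x : ℕ → X, Tendsto (fun n => ‖p (x n)‖) atTop (𝓝 0) →
      Tendsto (fun n => ‖m (T (x n))‖) atTop (𝓝 0) :=
  stmt_5_general p m hF T hT
end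

section
/- Let X be a normed lattice, Y a normed space, E = ℝ^{X*} (with pointwise order), and define p: X → E₊ by p(x)[f] = |f|(|x|) for f ∈ X*. If T: X → Y is a Dunford–Pettis operator (xₙ → 0 weakly implies ‖Txₙ‖_Y → 0), then T is sequentially p-continuous from (X,p,E) to (Y,‖·‖_Y,ℝ): p(xₙ) order-converges to 0 in E implies ‖Txₙ‖_Y → 0. -/
open Filter Topology

/-- `p(x)[f] = |f|(|x|)`, using the Riesz–Kantorovich formula
`|f|(|x|) = sup { f y : |y| ≤ |x| }`. -/
noncomputable def pE {X : Type*} [NormedAddCommGroup X] [Lattice X] [HasSolidNorm X] [IsOrderedAddMonoid X] [NormedSpace ℝ X]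
    (x : X) : (X →L[ℝ] ℝ) → ℝ :=
  fun f => sSup ((fun y => f y) '' {y : X | |y| ≤ |x|})

/- By the Riesz–Kantorovich formula, `|f (x n)| ≤ |f|(|x n|) = p(x n)[f]`, and order convergence in
`ℝ^{X*}` forces coordinatewise convergence, so `f (x n) → 0` for every `f ∈ X*`; that is, `x n → 0`
weakly, and the Dunford–Pettis property of `T` gives `‖T (x n)‖ → 0`. -/

section OrderConvergence

variable {α κ : Type*}

lemma exists_apply_lt_of_forall_le_imp_nonpos {z : κ → α → ℝ} (hpos : ∀ b, 0 ≤ z b)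
    (hinf : ∀ e : α → ℝ, (∀ b, e ≤ z b) → e ≤ 0) (a : α) {ε : ℝ} (hε : 0 < ε) :
    ∃ b, z b a < ε := by
  classical
  by_contra! hge
  -- otherwise the bump `Pi.single a ε` is a lower bound of `z` that is not `≤ 0`
  have hle : Pi.single a ε ≤ 0 := hinf _ fun b g => by
    rcases eq_or_ne g a with rfl | hg
    · simpa using hge b
    · simpa [Pi.single_apply, hg] using hpos b g
  simpa using (hle a).trans_lt hε

lemma OConv.tendsto_apply {ι : Type*} [Preorder ι] {x : ι → α → ℝ} {l : α → ℝ}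
    (h : OConv (· ≤ ·) x l) (a : α) : Tendsto (fun i => x i a) atTop (𝓝 (l a)) := by
  obtain ⟨κ, s, z, -, -, -, hpos, hinf, hdom⟩ := h
  refine Metric.tendsto_nhds.2 fun ε hε => ?_
  obtain ⟨b, hb⟩ := exists_apply_lt_of_forall_le_imp_nonpos hpos hinf a hε
  obtain ⟨i₀, hi₀⟩ := hdom b
  filter_upwards [mem_atTop i₀] with i hi
  calc dist (x i a) (l a) = |x i - l| a := rfl
    _ ≤ z b a := hi₀ i hi a
    _ < ε := hb

end OrderConvergence

section RieszKantorovich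

variable {X : Type*} [NormedAddCommGroup X] [Lattice X] [HasSolidNorm X] [IsOrderedAddMonoid X]
  [NormedSpace ℝ X]

lemma le_pE_of_abs_le (f : X →L[ℝ] ℝ) {x y : X} (hy : |y| ≤ |x|) : f y ≤ pE x f := by
  have hbdd : BddAbove ((fun y => f y) '' {y : X | |y| ≤ |x|}) := by
    refine ⟨‖f‖ * ‖x‖, ?_⟩
    rintro _ ⟨y, hy, rfl⟩
    calc f y ≤ ‖f‖ * ‖y‖ := (le_abs_self _).trans (f.le_opNorm y)
      _ ≤ ‖f‖ * ‖x‖ := by gcongr; exact norm_le_norm_of_abs_le_abs hy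
  exact le_csSup hbdd ⟨y, hy, rfl⟩

lemma abs_apply_le_pE (f : X →L[ℝ] ℝ) (x : X) : |f x| ≤ pE x f :=
  abs_le'.2 ⟨le_pE_of_abs_le f le_rfl, by simpa using le_pE_of_abs_le f (abs_neg x).le⟩

lemma tendsto_apply_of_oConvSeq_pE {x : ℕ → X} (hx : OConvSeq (fun n => pE (x n)) 0)
    (f : X →L[ℝ] ℝ) : Tendsto (fun n => f (x n)) atTop (𝓝 0) :=
  squeeze_zero_norm (fun n => abs_apply_le_pE f (x n)) (OConv.tendsto_apply hx f)

end RieszKantorovich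

/-- A Dunford–Pettis operator is sequentially p-continuous from
`(X,p,ℝ^{X*})` to `(Y,‖·‖,ℝ)`. -/
theorem stmt_7 {X Y : Type*} [NormedAddCommGroup X] [Lattice X] [HasSolidNorm X] [IsOrderedAddMonoid X] [NormedSpace ℝ X]
    [NormedAddCommGroup Y] [NormedSpace ℝ Y]
    (T : X →ₗ[ℝ] Y)
    -- T is Dunford–Pettis
    (hDP : ∀ x : ℕ → X,
      (∀ f : X →L[ℝ] ℝ, Tendsto (fun n => f (x n)) atTop (𝓝 0)) →
      Tendsto (fun n => ‖T (x n)‖) atTop (𝓝 0)) :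
    -- T is sequentially p-continuous
    ∀ x : ℕ → X, OConvSeq (fun n => pE (x n)) (0 : (X →L[ℝ] ℝ) → ℝ) →
      Tendsto (fun n => ‖T (x n)‖) atTop (𝓝 0) :=
  fun x hx => hDP x (tendsto_apply_of_oConvSeq_pE hx)
end

section
/- Let X be a normed lattice with weakly sequentially continuous lattice operations, Y a normed space, E = ℝ^{X*}, and p(x)[f] = |f|(|x|). If T: X → Y is sequentially p-continuous from (X,p,E) to (Y,‖·‖_Y,ℝ), then T is Dunford–Pettis: xₙ → 0 weakly implies ‖Txₙ‖_Y → 0. -/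
/-!
For `f ∈ X*` the Riesz–Kantorovich formula `u ↦ sup { f y : |y| ≤ u }` is additive on the positive
cone (Riesz decomposition) and bounded by `‖f‖ ‖u‖`, so it extends to a functional `|f| ∈ X*`, and
`p(x)[f] = |f|(|x|)`. If `xₙ → 0` weakly, then `|xₙ| → 0` weakly, so `p(xₙ) → 0` coordinatewise in
`ℝ^{X*}`. A coordinatewise null sequence is order null there, dominated by its tail suprema, and
the `p`-continuity of `T` gives `‖T xₙ‖ → 0`.
-/

open Filter Topology

section LatticeOrderedGroup

variable {X : Type*} [AddCommGroup X] [Lattice X] [IsOrderedAddMonoid X]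

theorem exists_add_eq_of_abs_le_add {y u v : X} (hu : 0 ≤ u) (hv : 0 ≤ v) (h : |y| ≤ u + v) :
    ∃ y₁ y₂, y = y₁ + y₂ ∧ |y₁| ≤ u ∧ |y₂| ≤ v := by
  have hy : y ≤ u + v := (le_abs_self y).trans h
  have hy' : -(u + v) ≤ y := neg_le.mp ((neg_le_abs y).trans h)
  refine ⟨y ⊓ u ⊔ -u, y - (y ⊓ u ⊔ -u), by abel, abs_le'.2 ⟨?_, ?_⟩, abs_le'.2 ⟨?_, ?_⟩⟩
  · exact sup_le inf_le_right (neg_le_self hu)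
  · exact neg_le.mp le_sup_right
  · rw [sub_le_comm]
    exact le_sup_of_le_left (le_inf (sub_le_self y hv) (sub_le_iff_le_add.2 hy))
  · rw [neg_sub, sub_le_iff_le_add]
    refine sup_le (inf_le_left.trans (le_add_of_nonneg_left hv)) ?_
    rw [neg_add'] at hy'
    exact sub_le_iff_le_add'.mp hy'

def posConeExtension (φ : X → ℝ) (x : X) : ℝ := φ x⁺ - φ x⁻

variable {φ : X → ℝ} (hφ : ∀ u v : X, 0 ≤ u → 0 ≤ v → φ (u + v) = φ u + φ v)
include hφ

theorem posConeExtension_eq_sub {a b x : X} (ha : 0 ≤ a) (hb : 0 ≤ b) (hab : a - b = x) :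
    posConeExtension φ x = φ a - φ b := by
  have h : a + x⁻ = x⁺ + b := sub_eq_sub_iff_add_eq_add.mp (by rw [hab, posPart_sub_negPart])
  have hφh := congrArg φ h
  rw [hφ _ _ ha (negPart_nonneg x), hφ _ _ (posPart_nonneg x) hb] at hφh
  unfold posConeExtension
  linarith

theorem posConeExtension_add (x z : X) :
    posConeExtension φ (x + z) = posConeExtension φ x + posConeExtension φ z := by
  have hsplit : (x⁺ + z⁺) - (x⁻ + z⁻) = x + z := by
    rw [add_sub_add_comm, posPart_sub_negPart, posPart_sub_negPart]
  rw [posConeExtension_eq_sub hφ (add_nonneg (posPart_nonneg x) (posPart_nonneg z))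
      (add_nonneg (negPart_nonneg x) (negPart_nonneg z)) hsplit,
    hφ _ _ (posPart_nonneg x) (posPart_nonneg z), hφ _ _ (negPart_nonneg x) (negPart_nonneg z)]
  unfold posConeExtension
  ring

theorem posConeExtension_of_nonneg {x : X} (hx : 0 ≤ x) : posConeExtension φ x = φ x := by
  have h0 : φ 0 = 0 := by simpa using hφ 0 0 le_rfl le_rfl
  rw [posConeExtension_eq_sub hφ hx le_rfl (sub_zero x), h0, sub_zero]

end LatticeOrderedGroup

section SolidNorm

variable {X : Type*} [NormedAddCommGroup X] [Lattice X] [HasSolidNorm X] [IsOrderedAddMonoid X]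

theorem norm_posPart_le (x : X) : ‖x⁺‖ ≤ ‖x‖ := by
  refine HasSolidNorm.solid ?_
  rw [abs_of_nonneg (posPart_nonneg x), ← posPart_add_negPart]
  exact le_add_of_nonneg_right (negPart_nonneg x)

theorem norm_negPart_le (x : X) : ‖x⁻‖ ≤ ‖x‖ := by
  refine HasSolidNorm.solid ?_
  rw [abs_of_nonneg (negPart_nonneg x), ← posPart_add_negPart]
  exact le_add_of_nonneg_left (posPart_nonneg x)

end SolidNorm

namespace ContinuousLinearMap

variable {X : Type*} [NormedAddCommGroup X] [Lattice X] [HasSolidNorm X] [NormedSpace ℝ X]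
  (f : X →L[ℝ] ℝ)

/-- The Riesz–Kantorovich formula for `|f| u`; only meaningful for `0 ≤ u`. -/
noncomputable def rieszKantorovich (u : X) : ℝ := sSup (f '' {y | |y| ≤ u})

theorem apply_le_mul_norm_of_abs_le {u y : X} (hy : |y| ≤ u) : f y ≤ ‖f‖ * ‖u‖ :=
  calc f y ≤ ‖f y‖ := Real.le_norm_self _
    _ ≤ ‖f‖ * ‖y‖ := f.le_opNorm y
    _ ≤ ‖f‖ * ‖u‖ := by gcongr; exact HasSolidNorm.solid (hy.trans (le_abs_self u))

theorem bddAbove_image_abs_le (u : X) : BddAbove (f '' {y | |y| ≤ u}) :=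
  ⟨‖f‖ * ‖u‖, by rintro _ ⟨y, hy, rfl⟩; exact f.apply_le_mul_norm_of_abs_le hy⟩

theorem apply_le_rieszKantorovich {u y : X} (hy : |y| ≤ u) : f y ≤ f.rieszKantorovich u :=
  le_csSup (f.bddAbove_image_abs_le u) ⟨y, hy, rfl⟩

theorem rieszKantorovich_le (u : X) : f.rieszKantorovich u ≤ ‖f‖ * ‖u‖ :=
  Real.sSup_le (by rintro _ ⟨y, hy, rfl⟩; exact f.apply_le_mul_norm_of_abs_le hy) (by positivity)

variable [IsOrderedAddMonoid X]

theorem rieszKantorovich_nonneg {u : X} (hu : 0 ≤ u) : 0 ≤ f.rieszKantorovich u := by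
  simpa using f.apply_le_rieszKantorovich (y := 0) (by simpa using hu)

theorem rieszKantorovich_add {u v : X} (hu : 0 ≤ u) (hv : 0 ≤ v) :
    f.rieszKantorovich (u + v) = f.rieszKantorovich u + f.rieszKantorovich v := by
  refine le_antisymm ?_ ?_
  · refine Real.sSup_le ?_
      (add_nonneg (f.rieszKantorovich_nonneg hu) (f.rieszKantorovich_nonneg hv))
    rintro _ ⟨y, hy, rfl⟩
    obtain ⟨y₁, y₂, rfl, h₁, h₂⟩ := exists_add_eq_of_abs_le_add hu hv hy
    rw [map_add]
    exact add_le_add (f.apply_le_rieszKantorovich h₁) (f.apply_le_rieszKantorovich h₂)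
  · have hne : ∀ {w : X}, 0 ≤ w → (f '' {y | |y| ≤ w}).Nonempty := fun hw =>
      ⟨f 0, 0, by simpa using hw, rfl⟩
    rw [rieszKantorovich, rieszKantorovich, ← csSup_add (hne hu) (f.bddAbove_image_abs_le u)
      (hne hv) (f.bddAbove_image_abs_le v)]
    refine csSup_le_csSup (f.bddAbove_image_abs_le _) ((hne hu).add (hne hv)) ?_
    rintro _ ⟨_, ⟨y₁, h₁, rfl⟩, _, ⟨y₂, h₂, rfl⟩, rfl⟩
    exact ⟨y₁ + y₂, (abs_add_le y₁ y₂).trans (add_le_add h₁ h₂), map_add f y₁ y₂⟩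

noncomputable def absAddMonoidHom : X →+ ℝ :=
  AddMonoidHom.mk' (posConeExtension f.rieszKantorovich)
    (posConeExtension_add fun _ _ => f.rieszKantorovich_add)

theorem norm_absAddMonoidHom_apply_le (x : X) : ‖f.absAddMonoidHom x‖ ≤ ‖f‖ * ‖x‖ := by
  have h₁ : f.rieszKantorovich x⁺ ≤ ‖f‖ * ‖x‖ := (f.rieszKantorovich_le x⁺).trans
    (mul_le_mul_of_nonneg_left (norm_posPart_le x) (norm_nonneg f))
  have h₂ : f.rieszKantorovich x⁻ ≤ ‖f‖ * ‖x‖ := (f.rieszKantorovich_le x⁻).trans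
    (mul_le_mul_of_nonneg_left (norm_negPart_le x) (norm_nonneg f))
  have h₃ := f.rieszKantorovich_nonneg (posPart_nonneg x)
  have h₄ := f.rieszKantorovich_nonneg (negPart_nonneg x)
  rw [Real.norm_eq_abs, abs_le]
  constructor <;> simp only [absAddMonoidHom, AddMonoidHom.mk'_apply, posConeExtension] <;> linarith

noncomputable def abs : X →L[ℝ] ℝ :=
  f.absAddMonoidHom.toRealLinearMap
    (AddMonoidHomClass.continuous_of_bound _ _ f.norm_absAddMonoidHom_apply_le)

theorem abs_apply_of_nonneg {u : X} (hu : 0 ≤ u) : f.abs u = f.rieszKantorovich u :=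
  posConeExtension_of_nonneg (fun _ _ => f.rieszKantorovich_add) hu

end ContinuousLinearMap

theorem pE_apply {X : Type*} [NormedAddCommGroup X] [Lattice X] [HasSolidNorm X]
    [IsOrderedAddMonoid X] [NormedSpace ℝ X] (x : X) (f : X →L[ℝ] ℝ) : pE x f = f.abs |x| :=
  (f.abs_apply_of_nonneg (abs_nonneg x)).symm

section TailSup

variable {a : ℕ → ℝ}

noncomputable def tailSup (a : ℕ → ℝ) (m : ℕ) : ℝ := ⨆ n, |a (n + m)|

theorem bddAbove_range_abs_add (ha : Tendsto a atTop (𝓝 0)) (m : ℕ) :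
    BddAbove (Set.range fun n => |a (n + m)|) :=
  ha.abs.bddAbove_range.mono (Set.range_comp_subset_range (· + m) fun n => |a n|)

theorem abs_le_tailSup (ha : Tendsto a atTop (𝓝 0)) {m n : ℕ} (h : m ≤ n) :
    |a n| ≤ tailSup a m := by
  have hle := le_ciSup (bddAbove_range_abs_add ha m) (n - m)
  rwa [Nat.sub_add_cancel h] at hle

theorem tailSup_antitone (ha : Tendsto a atTop (𝓝 0)) : Antitone (tailSup a) :=
  fun _ _ h => ciSup_le fun n => abs_le_tailSup ha (by omega)

theorem tendsto_tailSup (ha : Tendsto a atTop (𝓝 0)) : Tendsto (tailSup a) atTop (𝓝 0) := by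
  refine Metric.tendsto_atTop.2 fun ε hε => ?_
  obtain ⟨N, hN⟩ := Metric.tendsto_atTop.1 ha (ε / 2) (half_pos hε)
  refine ⟨N, fun m hm => ?_⟩
  have hle : tailSup a m ≤ ε / 2 := ciSup_le fun n => by
    simpa [Real.dist_eq] using (hN (n + m) (by omega)).le
  have hnn : 0 ≤ tailSup a m := (abs_nonneg _).trans (abs_le_tailSup ha le_rfl)
  rw [Real.dist_eq, sub_zero, abs_of_nonneg hnn]
  linarith

end TailSup

theorem oConvSeq_of_tendsto {ι : Type*} {q : ℕ → ι → ℝ} {l : ι → ℝ}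
    (h : ∀ i, Tendsto (fun n => q n i) atTop (𝓝 (l i))) : OConvSeq q l := by
  have hd : ∀ i, Tendsto (fun n => q n i - l i) atTop (𝓝 0) := fun i =>
    tendsto_sub_nhds_zero_iff.2 (h i)
  refine ⟨ℕ, (· ≤ ·), fun m i => tailSup (fun n => q n i - l i) m, ⟨0⟩,
    fun a b => ⟨max a b, le_max_left a b, le_max_right a b⟩,
    fun _ _ hm i => tailSup_antitone (hd i) hm,
    fun m i => (abs_nonneg _).trans (abs_le_tailSup (hd i) le_rfl),
    fun e he i => ge_of_tendsto' (tendsto_tailSup (hd i)) fun m => he m i,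
    fun m => ⟨m, fun n hn i => abs_le_tailSup (hd i) hn⟩⟩

/-- If the lattice operations of `X` are weakly sequentially continuous,
then a sequentially p-continuous operator from `(X,p,ℝ^{X*})` to `(Y,‖·‖,ℝ)` is
Dunford–Pettis. -/
theorem stmt_8 {X Y : Type*} [NormedAddCommGroup X] [Lattice X] [HasSolidNorm X] [IsOrderedAddMonoid X] [NormedSpace ℝ X]
    [NormedAddCommGroup Y] [NormedSpace ℝ Y]
    -- lattice operations are weakly sequentially continuous
    (hws : ∀ x : ℕ → X,
      (∀ f : X →L[ℝ] ℝ, Tendsto (fun n => f (x n)) atTop (𝓝 0)) →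
      (∀ f : X →L[ℝ] ℝ, Tendsto (fun n => f |x n|) atTop (𝓝 0)))
    (T : X →ₗ[ℝ] Y)
    -- T is sequentially p-continuous
    (hT : ∀ x : ℕ → X, OConvSeq (fun n => pE (x n)) (0 : (X →L[ℝ] ℝ) → ℝ) →
      Tendsto (fun n => ‖T (x n)‖) atTop (𝓝 0)) :
    -- T is Dunford–Pettis
    ∀ x : ℕ → X,
      (∀ f : X →L[ℝ] ℝ, Tendsto (fun n => f (x n)) atTop (𝓝 0)) →
      Tendsto (fun n => ‖T (x n)‖) atTop (𝓝 0) := by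
  intro x hx
  refine hT x (oConvSeq_of_tendsto fun f => ?_)
  simpa only [pE_apply, Pi.zero_apply] using hws x hx f.abs
end

section
/- Let (X,p,E) be an LNS with E a normed lattice, and (Y,m,F) an LNS with F a Banach lattice. If T: X → Y is compact as an operator between the mixed-normed spaces (X,‖p(·)‖_E) → (Y,‖m(·)‖_F), then T is sequentially p-compact: every p-bounded sequence xₙ in X has a subsequence x_{n_k} with m(Tx_{n_k} − y) order-converging to 0 in F for some y ∈ Y. -/
open Filter Topology

theorem OConvSeq.of_abs_sub_le_antitone {E : Type*} [Lattice E] [AddCommGroup E]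
    [TopologicalSpace E] [OrderClosedTopology E] {x z : ℕ → E} {l : E}
    (hz : Antitone z) (hz₀ : Tendsto z atTop (𝓝 0)) (hxz : ∀ n, |x n - l| ≤ z n) :
    OConvSeq x l :=
  ⟨ℕ, (· ≤ ·), z, ⟨0⟩, fun i j => ⟨max i j, le_max_left i j, le_max_right i j⟩,
    fun _ _ h => hz h, hz.le_of_tendsto hz₀, fun _ he => ge_of_tendsto' hz₀ he,
    fun b => ⟨b, fun n hn => (hxz n).trans (hz hn)⟩⟩

section TailSums

variable {G : Type*} [AddCommGroup G] [TopologicalSpace G] [IsTopologicalAddGroup G] [T2Space G]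
  {f : ℕ → G}

theorem Summable.tsum_nat_add_eq_add_tsum_nat_add (hf : Summable f) (i : ℕ) :
    ∑' k, f (k + i) = f i + ∑' k, f (k + (i + 1)) := by
  rw [((summable_nat_add_iff i).2 hf).tsum_eq_zero_add, zero_add]
  simp only [add_right_comm _ 1 i, add_assoc]

variable [PartialOrder G] [IsOrderedAddMonoid G]

theorem Summable.antitone_tsum_nat_add (hf : Summable f) (h : 0 ≤ f) :
    Antitone fun i => ∑' k, f (k + i) :=
  antitone_nat_of_succ_le fun i => by
    rw [hf.tsum_nat_add_eq_add_tsum_nat_add i]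
    exact le_add_of_nonneg_left (h i)

theorem Summable.le_tsum_nat_add [OrderClosedTopology G] (hf : Summable f) (h : 0 ≤ f) (i : ℕ) :
    f i ≤ ∑' k, f (k + i) := by
  rw [hf.tsum_nat_add_eq_add_tsum_nat_add i]
  exact le_add_of_nonneg_right (tsum_nonneg fun k => h _)

end TailSums

/-- The tail sums of `∑ |x n - l|` decrease to `0` and dominate `|x n - l|`. -/
theorem OConvSeq.of_summable_abs_sub {E : Type*} [Lattice E] [AddCommGroup E]
    [IsOrderedAddMonoid E] [TopologicalSpace E] [IsTopologicalAddGroup E] [T2Space E]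
    [OrderClosedTopology E] {x : ℕ → E} {l : E} (hx : Summable fun n => |x n - l|) :
    OConvSeq x l :=
  OConvSeq.of_abs_sub_le_antitone (hx.antitone_tsum_nat_add fun _ => abs_nonneg _)
    (tendsto_sum_nat_add fun n => |x n - l|) (hx.le_tsum_nat_add fun _ => abs_nonneg _)

/-- In a Banach lattice, a norm convergent sequence has a subsequence order converging to the
same limit: pass to a subsequence along which `‖x n - l‖ ≤ 2⁻ⁿ`. -/
theorem Filter.Tendsto.exists_strictMono_oConvSeq {E : Type*} [NormedAddCommGroup E] [Lattice E]
    [HasSolidNorm E] [IsOrderedAddMonoid E] [CompleteSpace E] {x : ℕ → E} {l : E}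
    (hx : Tendsto x atTop (𝓝 l)) : ∃ φ : ℕ → ℕ, StrictMono φ ∧ OConvSeq (x ∘ φ) l := by
  obtain ⟨φ, hφ, hclose⟩ := extraction_forall_of_eventually fun n =>
    hx.eventually (Metric.closedBall_mem_nhds l (by positivity : (0 : ℝ) < (1 / 2) ^ n))
  refine ⟨φ, hφ, OConvSeq.of_summable_abs_sub (summable_geometric_two.of_norm_bounded fun n => ?_)⟩
  rw [norm_abs_eq_norm, ← dist_eq_norm]
  exact hclose n

theorem stmt_12_general {X E Y F : Type*} [AddCommGroup X] [Module ℝ X]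
    [NormedAddCommGroup E] [Lattice E] [HasSolidNorm E] [IsOrderedAddMonoid E] [NormedSpace ℝ E]
    [AddCommGroup Y] [Module ℝ Y]
    [NormedAddCommGroup F] [Lattice F] [HasSolidNorm F] [IsOrderedAddMonoid F] [CompleteSpace F]
    (p : X → E) (hp : IsVectorNorm p)
    (m : Y → F)
    (T : X →ₗ[ℝ] Y)
    -- T is compact for the mixed norms
    (hcpt : ∀ x : ℕ → X, (∃ C : ℝ, ∀ n, ‖p (x n)‖ ≤ C) →
      ∃ (φ : ℕ → ℕ) (y : Y), StrictMono φ ∧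
        Tendsto (fun k => ‖m (T (x (φ k)) - y)‖) atTop (𝓝 0)) :
    -- T is sequentially p-compact
    ∀ x : ℕ → X, (∃ e : E, ∀ n, p (x n) ≤ e) →
      ∃ (φ : ℕ → ℕ) (y : Y), StrictMono φ ∧
        OConvSeq (fun k => m (T (x (φ k)) - y)) 0 := by
  rintro x ⟨e, he⟩
  have hbdd : ∀ n, ‖p (x n)‖ ≤ ‖e‖ := fun n =>
    norm_le_norm_of_abs_le_abs (abs_le_abs_of_nonneg (hp.nonneg _) (he n))
  obtain ⟨φ, y, hφ, hlim⟩ := hcpt x ⟨‖e‖, hbdd⟩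
  obtain ⟨ψ, hψ, hoconv⟩ := (tendsto_zero_iff_norm_tendsto_zero.2 hlim).exists_strictMono_oConvSeq
  exact ⟨φ ∘ ψ, y, hφ.comp hψ, hoconv⟩

/-- An operator compact between the mixed-normed spaces is sequentially
p-compact. -/
theorem stmt_12 {X E Y F : Type*} [AddCommGroup X] [Module ℝ X]
    [NormedAddCommGroup E] [Lattice E] [HasSolidNorm E] [IsOrderedAddMonoid E] [NormedSpace ℝ E]
    [AddCommGroup Y] [Module ℝ Y]
    [NormedAddCommGroup F] [Lattice F] [HasSolidNorm F] [IsOrderedAddMonoid F] [NormedSpace ℝ F] [CompleteSpace F]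
    (p : X → E) (hp : IsVectorNorm p)
    (m : Y → F) (hm : IsVectorNorm m)
    (T : X →ₗ[ℝ] Y)
    -- T is compact for the mixed norms
    (hcpt : ∀ x : ℕ → X, (∃ C : ℝ, ∀ n, ‖p (x n)‖ ≤ C) →
      ∃ (φ : ℕ → ℕ) (y : Y), StrictMono φ ∧
        Tendsto (fun k => ‖m (T (x (φ k)) - y)‖) atTop (𝓝 0)) :
    -- T is sequentially p-compact
    ∀ x : ℕ → X, (∃ e : E, ∀ n, p (x n) ≤ e) →
      ∃ (φ : ℕ → ℕ) (y : Y), StrictMono φ ∧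
        OConvSeq (fun k => m (T (x (φ k)) - y)) 0 :=
  stmt_12_general p hp m T hcpt
end

section
/- Let (X,p,E) be an LNS with E an AM-space with strong unit, and (Y,m,F) an LNS with F an order continuous normed lattice. If T: X → Y is sequentially p-compact, then T is compact between the mixed-normed spaces (X,‖p(·)‖_E) and (Y,‖m(·)‖_F). -/
/-!
Norm-bounded sets of an AM-space with strong unit `e` are order bounded (by a multiple of `e`),
so p-compactness of `T` yields a subsequence whose images p-converge; order continuity of `F`
turns that order convergence of `m (T x - y)` into norm convergence.
-/

open Filter Topology

theorem le_max_smul_of_norm_le {E : Type*} [NormedAddCommGroup E] [Lattice E] [Module ℝ E]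
    {e : E} (hunit : ∀ (z : E) (l : ℝ), 0 ≤ l → ‖z‖ ≤ l → |z| ≤ l • e)
    {z : E} {C : ℝ} (hz : ‖z‖ ≤ C) : z ≤ max C 0 • e :=
  (le_abs_self z).trans <| hunit z _ (le_max_right C 0) (hz.trans (le_max_left C 0))

theorem stmt_13_general {X E Y F : Type*} [AddCommGroup X] [Module ℝ X]
    [NormedAddCommGroup E] [Lattice E] [NormedSpace ℝ E]
    [AddCommGroup Y] [Module ℝ Y]
    [NormedAddCommGroup F] [Lattice F]
    (p : X → E)
    (m : Y → F)
    -- E is an AM-space with strong unit e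
    (e : E)
    (hAM : ∀ (z : E) (l : ℝ), 0 ≤ l → (‖z‖ ≤ l ↔ |z| ≤ l • e))
    -- F is order continuous: order convergence implies norm convergence
    (hF : ∀ (f : ℕ → F) (l : F), OConvSeq f l → Tendsto (fun n => ‖f n - l‖) atTop (𝓝 0))
    (T : X →ₗ[ℝ] Y)
    -- T is sequentially p-compact
    (hcpt : ∀ x : ℕ → X, (∃ e' : E, ∀ n, p (x n) ≤ e') →
      ∃ (φ : ℕ → ℕ) (y : Y), StrictMono φ ∧
        OConvSeq (fun k => m (T (x (φ k)) - y)) 0) :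
    -- T is compact for the mixed norms
    ∀ x : ℕ → X, (∃ C : ℝ, ∀ n, ‖p (x n)‖ ≤ C) →
      ∃ (φ : ℕ → ℕ) (y : Y), StrictMono φ ∧
        Tendsto (fun k => ‖m (T (x (φ k)) - y)‖) atTop (𝓝 0) := by
  rintro x ⟨C, hC⟩
  obtain ⟨φ, y, hφ, hconv⟩ :=
    hcpt x ⟨max C 0 • e, fun n => le_max_smul_of_norm_le (fun z l hl => (hAM z l hl).mp) (hC n)⟩
  exact ⟨φ, y, hφ, by simpa using hF _ 0 hconv⟩

/-- A sequentially p-compact operator (E an AM-space with strong unit,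
F order continuous) is compact for the mixed norms. -/
theorem stmt_13 {X E Y F : Type*} [AddCommGroup X] [Module ℝ X]
    [NormedAddCommGroup E] [Lattice E] [HasSolidNorm E] [IsOrderedAddMonoid E] [NormedSpace ℝ E]
    [AddCommGroup Y] [Module ℝ Y]
    [NormedAddCommGroup F] [Lattice F] [HasSolidNorm F] [IsOrderedAddMonoid F] [NormedSpace ℝ F]
    (p : X → E) (hp : IsVectorNorm p)
    (m : Y → F) (hm : IsVectorNorm m)
    -- E is an AM-space with strong unit e
    (e : E) (he : 0 ≤ e)
    (hAM : ∀ (z : E) (l : ℝ), 0 ≤ l → (‖z‖ ≤ l ↔ |z| ≤ l • e))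
    -- F is order continuous: order convergence implies norm convergence
    (hF : ∀ (f : ℕ → F) (l : F), OConvSeq f l → Tendsto (fun n => ‖f n - l‖) atTop (𝓝 0))
    (T : X →ₗ[ℝ] Y)
    -- T is sequentially p-compact
    (hcpt : ∀ x : ℕ → X, (∃ e' : E, ∀ n, p (x n) ≤ e') →
      ∃ (φ : ℕ → ℕ) (y : Y), StrictMono φ ∧
        OConvSeq (fun k => m (T (x (φ k)) - y)) 0) :
    -- T is compact for the mixed norms
    ∀ x : ℕ → X, (∃ C : ℝ, ∀ n, ‖p (x n)‖ ≤ C) →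
      ∃ (φ : ℕ → ℕ) (y : Y), StrictMono φ ∧
        Tendsto (fun k => ‖m (T (x (φ k)) - y)‖) atTop (𝓝 0) :=
  stmt_13_general p m e hAM hF T hcpt
end
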